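/- The independence number of G = H_B(n,k) equals ∑_{i=1}^{n} 2^(i-1) C(n,i) - C(n,k), i.e., |V_2|, and consequently the vertex covering number equals C(n,k). -/

import Mathlib

open Finset

/-- A "signed set" vertex of the bipartite Kneser B type-k graph: a nonempty
subset of `{1,…,n}` together with a sign for each element, normalized so that
signs outside the set are `true` and the maximal element has positive sign. -/
def SignedSet (n : ℕ) :=
  {p : Finset (Fin n) × (Fin n → Bool) //
    p.1.Nonempty ∧ (∀ i, i ∉ p.1 → p.2 i = true) ∧
      ∀ i ∈ p.1, (∀ j ∈ p.1, j ≤ i) → p.2 i = true}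

instance (n : ℕ) : Finite (SignedSet n) := by unfold SignedSet; infer_instance

noncomputable instance (n : ℕ) : Fintype (SignedSet n) := Fintype.ofFinite _

/-- The underlying (unsigned) set `A† = {|x| : x ∈ A}`. -/
def SignedSet.dagger {n : ℕ} (v : SignedSet n) : Finset (Fin n) := v.1.1

/-- Membership in the part `V₁`: all-positive sets of size `k`. -/
def SignedSet.inV1 {n : ℕ} (k : ℕ) (v : SignedSet n) : Prop :=
  (∀ i, v.1.2 i = true) ∧ v.dagger.card = k

/-- Membership in the part `V₂`. -/
def SignedSet.inV2 {n : ℕ} (k : ℕ) (v : SignedSet n) : Prop := ¬ v.inV1 k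

/-- The bipartite Kneser B type-k graph `H_B(n,k)`. -/
def HB (n k : ℕ) : SimpleGraph (SignedSet n) where
  Adj u v := ((u.inV1 k ∧ v.inV2 k) ∨ (v.inV1 k ∧ u.inV2 k)) ∧
    (u.dagger ⊂ v.dagger ∨ v.dagger ⊂ u.dagger)
  symm := by
    constructor
    intro u v h
    exact ⟨h.1.symm, h.2.symm⟩
  loopless := by
    constructor
    intro v h
    rcases h.2 with hs | hs <;> exact (lt_irrefl _ hs)

/-- The independence number: maximum size of an independent set of vertices. -/
noncomputable def indepNum {V : Type*} [Fintype V] (G : SimpleGraph V) : ℕ :=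
  sSup {m | ∃ S : Finset V, (S : Set V).Pairwise (fun a b => ¬ G.Adj a b) ∧ S.card = m}

/-- The vertex covering number: minimum size of a vertex cover. -/
noncomputable def coverNum {V : Type*} [Fintype V] (G : SimpleGraph V) : ℕ :=
  sInf {m | ∃ C : Finset V, (∀ u v, G.Adj u v → u ∈ C ∨ v ∈ C) ∧ C.card = m}

open scoped Classical in
lemma signs_card {n : ℕ} (A : Finset (Fin n)) (hA : A.Nonempty) :
    (univ.filter (fun f : Fin n → Bool => (∀ i ∉ A, f i = true) ∧
      ∀ i ∈ A, (∀ j ∈ A, j ≤ i) → f i = true)).card = 2 ^ (A.card - 1) := by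
  classical
  set M := A.max' hA with hM
  have hMA : M ∈ A := A.max'_mem hA
  have key : (univ.filter (fun f : Fin n → Bool => (∀ i ∉ A, f i = true) ∧
      ∀ i ∈ A, (∀ j ∈ A, j ≤ i) → f i = true)) =
      Fintype.piFinset (fun i => if i ∈ A.erase M then ({true, false} : Finset Bool)
        else {true}) := by
    ext f
    simp only [mem_filter, mem_univ, true_and, Fintype.mem_piFinset]
    constructor
    · rintro ⟨h1, h2⟩ i
      by_cases hi : i ∈ A.erase M
      · simp [hi]
      · rw [if_neg hi]
        rw [Finset.mem_erase] at hi
        push_neg at hi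
        by_cases hiA : i ∈ A
        · have hiM : i = M := by by_contra hc; exact (hi hc) hiA
          rw [hiM]
          simp [h2 M hMA (fun j hj => A.le_max' j hj)]
        · simp [h1 i hiA]
    · intro h
      have h' : ∀ i, i ∉ A.erase M → f i = true := by
        intro i hi
        have := h i
        rw [if_neg hi, Finset.mem_singleton] at this
        exact this
      refine ⟨fun i hi => h' i (fun hc => hi (Finset.mem_of_mem_erase hc)), ?_⟩
      intro i hiA hmax
      have : i = M := le_antisymm (A.le_max' i hiA) (hmax M hMA)
      exact h' i (this ▸ Finset.notMem_erase M A)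
  rw [key, Fintype.card_piFinset]
  have : ∀ i : Fin n, (if i ∈ A.erase M then ({true, false} : Finset Bool) else {true}).card
      = if i ∈ A.erase M then 2 else 1 := by
    intro i; split <;> simp
  rw [Finset.prod_congr rfl (fun i _ => this i)]
  rw [Finset.prod_ite_mem, Finset.univ_inter, Finset.prod_const,
    Finset.card_erase_of_mem hMA]

open scoped Classical in
lemma fiber_card {n : ℕ} (A : Finset (Fin n)) (hA : A.Nonempty) :
    (univ.filter (fun v : SignedSet n => v.dagger = A)).card = 2 ^ (A.card - 1) := by
  classical
  rw [← signs_card A hA]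
  refine Finset.card_bij' (fun (v : SignedSet n) _ => v.1.2)
    (fun f hf => (⟨(A, f), hA, (Finset.mem_filter.mp hf).2.1,
      (Finset.mem_filter.mp hf).2.2⟩ : SignedSet n)) ?_ ?_ ?_ ?_
  · intro v hv
    have hd' : v.1.1 = A := (Finset.mem_filter.mp hv).2
    obtain ⟨hne, h1, h2⟩ := v.2
    rw [hd'] at h1 h2
    exact Finset.mem_filter.mpr ⟨Finset.mem_univ _, h1, h2⟩
  · intro f hf
    exact Finset.mem_filter.mpr ⟨Finset.mem_univ _, rfl⟩
  · intro v hv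
    have hd' : v.1.1 = A := (Finset.mem_filter.mp hv).2
    exact Subtype.ext (Prod.ext hd'.symm rfl)
  · intro f hf
    rfl

open scoped Classical in
lemma fiber_card_empty {n : ℕ} :
    (univ.filter (fun v : SignedSet n => v.dagger = (∅ : Finset (Fin n)))).card = 0 := by
  rw [Finset.card_eq_zero, Finset.filter_eq_empty_iff]
  intro v _
  exact fun h => (v.2.1.ne_empty) h

lemma total_card (n : ℕ) :
    Fintype.card (SignedSet n) = ∑ i ∈ Finset.Icc 1 n, 2 ^ (i - 1) * n.choose i := by
  classical
  rw [← Finset.card_univ]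
  rw [Finset.card_eq_sum_card_fiberwise
    (f := fun v : SignedSet n => v.dagger) (t := univ) (fun x _ => Finset.mem_univ _)]
  have step : ∀ A ∈ (univ : Finset (Finset (Fin n))),
      ((univ : Finset (SignedSet n)).filter (fun v => v.dagger = A)).card
        = if A.card = 0 then 0 else 2 ^ (A.card - 1) := by
    intro A _
    by_cases hA : A.Nonempty
    · rw [fiber_card A hA, if_neg (by simpa [Finset.card_eq_zero] using hA.ne_empty)]
    · rw [Finset.not_nonempty_iff_eq_empty] at hA
      subst hA
      simpa using fiber_card_empty (n := n)
  rw [Finset.sum_congr rfl step, ← Finset.powerset_univ,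
    Finset.sum_powerset_apply_card (f := fun i => if i = 0 then 0 else 2 ^ (i - 1)),
    Finset.card_univ, Fintype.card_fin]
  rw [show ∑ i ∈ Finset.Icc 1 n, 2 ^ (i - 1) * n.choose i
      = ∑ i ∈ Finset.Icc 1 n, n.choose i •
          (if i = 0 then 0 else 2 ^ (i - 1)) by
    refine Finset.sum_congr rfl fun i hi => ?_
    rw [Finset.mem_Icc] at hi
    rw [if_neg (by omega), smul_eq_mul, mul_comm]]
  apply (Finset.sum_subset ?_ ?_).symm
  · intro i hi
    rw [Finset.mem_Icc] at hi
    rw [Finset.mem_range]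
    omega
  · intro i hi hni
    rw [Finset.mem_range] at hi
    rw [Finset.mem_Icc] at hni
    have : i = 0 := by omega
    simp [this]

open scoped Classical in
lemma card_V1 (n k : ℕ) (hk : 1 ≤ k) :
    (univ.filter (fun v : SignedSet n => v.inV1 k)).card = n.choose k := by
  classical
  have hpc : (Finset.powersetCard k (univ : Finset (Fin n))).card = n.choose k := by
    rw [Finset.card_powersetCard, Finset.card_univ, Fintype.card_fin]
  rw [← hpc]
  refine Finset.card_bij' (fun (v : SignedSet n) _ => v.dagger)
    (fun A hA => (⟨(A, fun _ => true), ?_, fun _ _ => rfl, fun _ _ _ => rfl⟩ : SignedSet n))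
    ?_ ?_ ?_ ?_
  · rw [Finset.mem_powersetCard] at hA
    rw [← Finset.card_pos, hA.2]
    exact hk
  · intro v hv
    rw [Finset.mem_powersetCard]
    exact ⟨Finset.subset_univ _, (Finset.mem_filter.mp hv).2.2⟩
  · intro A hA
    refine Finset.mem_filter.mpr ⟨Finset.mem_univ _, fun i => rfl, ?_⟩
    exact (Finset.mem_powersetCard.mp hA).2
  · intro v hv
    have h1 := (Finset.mem_filter.mp hv).2.1
    exact Subtype.ext (Prod.ext rfl (funext fun i => (h1 i).symm))
  · intro A hA
    rfl

open scoped Classical in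
lemma card_V2 (n k : ℕ) (hk : 1 ≤ k) :
    (univ.filter (fun v : SignedSet n => ¬ v.inV1 k)).card
      = Fintype.card (SignedSet n) - n.choose k := by
  classical
  rw [Finset.filter_not, Finset.card_sdiff_of_subset (Finset.filter_subset _ _),
    Finset.card_univ, card_V1 n k hk]
lemma choose_le_pow (n k : ℕ) (hk : 1 ≤ k) (hkn : k < n) :
    n.choose k ≤ 2 ^ (n - 1) := by
  obtain ⟨m, rfl⟩ : ∃ m, n = m + 1 := ⟨n - 1, by omega⟩
  obtain ⟨j, rfl⟩ : ∃ j, k = j + 1 := ⟨k - 1, by omega⟩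
  rw [Nat.choose_succ_succ]
  have hsub : ({j, j + 1} : Finset ℕ) ⊆ Finset.range (m + 1) := by
    intro x hx
    simp only [Finset.mem_insert, Finset.mem_singleton] at hx
    rw [Finset.mem_range]
    omega
  calc m.choose j + m.choose (j + 1)
      = ∑ i ∈ ({j, j + 1} : Finset ℕ), m.choose i := (Finset.sum_pair (by omega)).symm
    _ ≤ ∑ i ∈ Finset.range (m + 1), m.choose i := Finset.sum_le_sum_of_subset hsub
    _ = 2 ^ m := Nat.sum_range_choose m
    _ = 2 ^ (m + 1 - 1) := by norm_num

open scoped Classical in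
lemma indep_le (n k : ℕ) (hk : 1 ≤ k) (hkn : k < n) (S : Finset (SignedSet n))
    (hS : (S : Set (SignedSet n)).Pairwise (fun a b => ¬ (HB n k).Adj a b)) :
    S.card ≤ Fintype.card (SignedSet n) - n.choose k := by
  classical
  by_cases hcase : ∀ v ∈ S, ¬ v.inV1 k
  · have hsub : S ⊆ univ.filter (fun v : SignedSet n => ¬ v.inV1 k) := fun v hv =>
      Finset.mem_filter.mpr ⟨Finset.mem_univ _, hcase v hv⟩
    calc S.card ≤ _ := Finset.card_le_card hsub
      _ = Fintype.card (SignedSet n) - n.choose k := card_V2 n k hk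
  · push_neg at hcase
    obtain ⟨u, huS, hu1⟩ := hcase
    have hfull : ∀ w ∈ S, w.dagger ≠ (univ : Finset (Fin n)) := by
      intro w hwS hw
      have hwcard : w.dagger.card = n := by rw [hw, Finset.card_univ, Fintype.card_fin]
      have hne : u ≠ w := by
        intro h
        rw [h] at hu1
        have := hu1.2
        omega
      have hw2 : w.inV2 k := by
        intro hcon
        have h1 := hcon.2
        omega
      have hssub : u.dagger ⊂ w.dagger := by
        rw [hw]
        refine Finset.ssubset_univ_iff.mpr ?_
        intro h
        have h2 := hu1.2
        rw [h, Finset.card_univ, Fintype.card_fin] at h2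
        omega
      exact hS huS hwS hne ⟨Or.inl ⟨hu1, hw2⟩, Or.inl hssub⟩
    have hsub : S ⊆ univ \ univ.filter (fun v : SignedSet n => v.dagger = univ) := by
      intro w hw
      rw [Finset.mem_sdiff, Finset.mem_filter]
      exact ⟨Finset.mem_univ _, fun h => hfull w hw h.2⟩
    have hfc : (univ.filter (fun v : SignedSet n => v.dagger = univ)).card = 2 ^ (n - 1) := by
      rw [fiber_card univ (Finset.univ_nonempty_iff.mpr ⟨⟨0, by omega⟩⟩),
        Finset.card_univ, Fintype.card_fin]
    calc S.card ≤ _ := Finset.card_le_card hsub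
      _ = Fintype.card (SignedSet n) - 2 ^ (n - 1) := by
          rw [Finset.card_sdiff_of_subset (Finset.filter_subset _ _), Finset.card_univ, hfc]
      _ ≤ Fintype.card (SignedSet n) - n.choose k :=
          Nat.sub_le_sub_left (choose_le_pow n k hk hkn) _

theorem stmt7 (n k : ℕ) (hk : 1 ≤ k) (hkn : k < n) :
    indepNum (HB n k) = (∑ i ∈ Finset.Icc 1 n, 2 ^ (i - 1) * n.choose i) - n.choose k ∧
    coverNum (HB n k) = n.choose k := by
  classical
  have hN := total_card n
  have hV2indep : (((univ.filter (fun v : SignedSet n => ¬ v.inV1 k)) : Finset (SignedSet n)) :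
      Set (SignedSet n)).Pairwise (fun a b => ¬ (HB n k).Adj a b) := by
    intro a ha b hb hne hadj
    rw [Finset.mem_coe, Finset.mem_filter] at ha hb
    rcases hadj.1 with ⟨h1, -⟩ | ⟨h1, -⟩
    · exact ha.2 h1
    · exact hb.2 h1
  have hmem : ∃ S : Finset (SignedSet n),
      ((S : Set (SignedSet n)).Pairwise fun a b => ¬ (HB n k).Adj a b) ∧
        S.card = Fintype.card (SignedSet n) - n.choose k :=
    ⟨_, hV2indep, card_V2 n k hk⟩
  have hub : ∀ m, (∃ S : Finset (SignedSet n),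
      ((S : Set (SignedSet n)).Pairwise fun a b => ¬ (HB n k).Adj a b) ∧ S.card = m) →
        m ≤ Fintype.card (SignedSet n) - n.choose k := by
    rintro m ⟨S, hS, rfl⟩
    exact indep_le n k hk hkn S hS
  have hindep : indepNum (HB n k) = Fintype.card (SignedSet n) - n.choose k := by
    unfold indepNum
    exact le_antisymm (csSup_le ⟨_, hmem⟩ (fun m hm => hub m hm))
      (le_csSup ⟨_, fun m hm => hub m hm⟩ hmem)
  have hmemC : ∃ C : Finset (SignedSet n),
      (∀ u v, (HB n k).Adj u v → u ∈ C ∨ v ∈ C) ∧ C.card = n.choose k := by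
    refine ⟨univ.filter (fun v : SignedSet n => v.inV1 k), ?_, card_V1 n k hk⟩
    intro u v hadj
    rcases hadj.1 with ⟨h1, -⟩ | ⟨h1, -⟩
    · exact Or.inl (Finset.mem_filter.mpr ⟨Finset.mem_univ _, h1⟩)
    · exact Or.inr (Finset.mem_filter.mpr ⟨Finset.mem_univ _, h1⟩)
  have hlbC : ∀ m, (∃ C : Finset (SignedSet n),
      (∀ u v, (HB n k).Adj u v → u ∈ C ∨ v ∈ C) ∧ C.card = m) → n.choose k ≤ m := by
    rintro m ⟨C, hC, rfl⟩
    have hcompl : (((univ \ C : Finset (SignedSet n))) :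
        Set (SignedSet n)).Pairwise (fun a b => ¬ (HB n k).Adj a b) := by
      intro a ha b hb hne hadj
      rw [Finset.mem_coe, Finset.mem_sdiff] at ha hb
      rcases hC a b hadj with h | h
      · exact ha.2 h
      · exact hb.2 h
    have h1 := indep_le n k hk hkn (univ \ C) hcompl
    rw [Finset.card_sdiff_of_subset (Finset.subset_univ C), Finset.card_univ] at h1
    have h2 : n.choose k ≤ Fintype.card (SignedSet n) := by
      rw [← card_V1 n k hk, ← Finset.card_univ (α := SignedSet n)]
      exact Finset.card_filter_le _ _
    have h3 : C.card ≤ Fintype.card (SignedSet n) := Finset.card_le_univ C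
    omega
  have hcover : coverNum (HB n k) = n.choose k := by
    unfold coverNum
    exact le_antisymm (Nat.sInf_le hmemC)
      (le_csInf ⟨_, hmemC⟩ (fun m hm => hlbC m hm))
  exact ⟨hindep.trans (by rw [hN]), hcover⟩
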